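/- arXiv:2008.00739 — 5 statements merged into one kernel-verified Lean document; each statement's English description precedes it below -/
import Mathlib

section
/- Let v, u, u' be three distinct points in the plane, no three collinear, and let r > 0 with u and u' both within distance r of v. If u ⪯_v u', i.e. the set of points on the circle of radius r centered at v that lie within distance r of u is contained in the set of points on that circle within distance r of u', then the distance from u to v is strictly greater than the distance from u' to v. -/
open Metric
open RealInnerProductSpace
set_option maxHeartbeats 1000000

noncomputable section

/-- Points of the plane. -/
abbrev Pt := EuclideanSpace ℝ (Fin 2)

/-- `Zd r p` : the closed disk (communication zone) of radius `r` centered at `p`. -/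
def Zd (r : ℝ) (p : Pt) : Set Pt := Metric.closedBall p r

/-- `Zb r p` : the boundary circle of the communication zone of `p`. -/
def Zb (r : ℝ) (p : Pt) : Set Pt := Metric.sphere p r

/-- The arc-containment relation `a ⪯_v b`. -/
def arcLe (r : ℝ) (v a b : Pt) : Prop := Zd r a ∩ Zb r v ⊆ Zd r b ∩ Zb r v

/-- `u` is a neighbor of `v`. -/
def Nbr (r : ℝ) (v u : Pt) : Prop := u ≠ v ∧ dist u v ≤ r

/-- General position: no three distinct points of `V` are collinear. -/
def GenPos (V : Set Pt) : Prop :=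
  ∀ a ∈ V, ∀ b ∈ V, ∀ c ∈ V, a ≠ b → a ≠ c → b ≠ c → ¬ Collinear ℝ ({a, b, c} : Set Pt)

/-- `u` is a maximal neighbor of `v` within `V`. -/
def MaxNbr (V : Set Pt) (r : ℝ) (v u : Pt) : Prop :=
  u ∈ V ∧ Nbr r v u ∧ ∀ u' ∈ V, u' ≠ u → Nbr r v u' → ¬ arcLe r v u u'

/-- `v` is an interior node of `V`. -/
def IsInterior (V : Set Pt) (r : ℝ) (v : Pt) : Prop :=
  ∀ z ∈ Zb r v, ∃ v' ∈ V, v' ≠ v ∧ z ∈ Zd r v'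

/-- Counterclockwise rotation by `π/2`. -/
def rot90 (x : Pt) : Pt := (WithLp.equiv 2 (Fin 2 → ℝ)).symm ![-(x 1), x 0]

/-- The boundary intersection `CCW(v, v')` of the circles `∂Z(v)` and `∂Z(v')`:
traversing from `CCW(v,v')` to `CW(v,v')` clockwise along `∂Z(v)` sweeps an angle `< π`. -/
def ccwPt (r : ℝ) (v v' : Pt) : Pt :=
  midpoint ℝ v v' + (Real.sqrt (r ^ 2 - (dist v v' / 2) ^ 2) / dist v v') • rot90 (v' - v)

/-- The boundary intersection `CW(v, v')`. -/
def cwPt (r : ℝ) (v v' : Pt) : Pt :=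
  midpoint ℝ v v' - (Real.sqrt (r ^ 2 - (dist v v' / 2) ^ 2) / dist v v') • rot90 (v' - v)

/-- A communication wheel of `v` with `m` rim nodes `w 0, …, w (m-1)` (indices mod `m`). -/
def IsCommWheel (V : Set Pt) (r : ℝ) (v : Pt) (m : ℕ) (w : ZMod m → Pt) : Prop :=
  3 ≤ m ∧ Function.Injective w ∧
  (∀ i, MaxNbr V r v (w i)) ∧
  (∀ i, dist (w i) (w (i + 1)) ≤ r) ∧
  (∀ i, ccwPt r v (w i) ∈ Zd r (w (i + 1)) ∧ cwPt r v (w i) ∈ Zd r (w (i - 1)))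

lemma inner_rot90_self (x : Pt) : ⟪rot90 x, x⟫ = 0 := by
  simp [PiLp.inner_apply, rot90, Fin.sum_univ_two]
  ring

lemma inner_rot90_rot90 (x : Pt) : ⟪rot90 x, rot90 x⟫ = ⟪x, x⟫ := by
  simp only [PiLp.inner_apply, rot90, Fin.sum_univ_two, WithLp.equiv_symm_apply, Matrix.cons_val_zero, Matrix.cons_val_one, RCLike.inner_apply, conj_trivial]
  ring


/-- Lemma: arc containment implies larger distance. -/
theorem stmt_0 (r : ℝ) (hr : 0 < r) (v u u' : Pt)
    (huv : u ≠ v) (hu'v : u' ≠ v) (huu' : u ≠ u')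
    (hcol : ¬ Collinear ℝ ({v, u, u'} : Set Pt))
    (hu : dist u v ≤ r) (hu' : dist u' v ≤ r)
    (hle : arcLe r v u u') :
    dist u' v < dist u v := by
  set a : Pt := u - v with ha
  set b : Pt := u' - v with hb
  have hd : dist u v = ‖a‖ := dist_eq_norm u v
  have hd' : dist u' v = ‖b‖ := dist_eq_norm u' v
  have hdpos : 0 < ‖a‖ := by
    rw [norm_pos_iff]; exact sub_ne_zero.mpr huv
  have hd'pos : 0 < ‖b‖ := by
    rw [norm_pos_iff]; exact sub_ne_zero.mpr hu'v
  set d : ℝ := ‖a‖ with hdd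
  set d' : ℝ := ‖b‖ with hdd'
  have hda : ⟪a, a⟫ = d ^ 2 := real_inner_self_eq_norm_sq a
  -- key membership criterion
  have hkey : ∀ z w : Pt, dist z v = r → (dist z w ≤ r ↔ ‖w - v‖ ^ 2 ≤ 2 * ⟪z - v, w - v⟫) := by
    intro z w hz
    have hzv : ‖z - v‖ = r := by rw [← dist_eq_norm]; exact hz
    have h1 : dist z w ^ 2 = r ^ 2 - 2 * ⟪z - v, w - v⟫ + ‖w - v‖ ^ 2 := by
      rw [dist_eq_norm]
      have : z - w = (z - v) - (w - v) := by abel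
      rw [this, norm_sub_sq_real, hzv]
    constructor
    · intro h
      nlinarith [dist_nonneg (x := z) (y := w)]
    · intro h
      nlinarith [dist_nonneg (x := z) (y := w), sq_nonneg (dist z w - r)]
  -- the two endpoints
  set h : ℝ := Real.sqrt (r ^ 2 - d ^ 2 / 4) with hh
  have hh2 : h ^ 2 = r ^ 2 - d ^ 2 / 4 := by
    rw [hh, Real.sq_sqrt]; nlinarith [hd ▸ hu]
  set c : Pt := (h / d) • rot90 a with hc
  set zp : Pt := v + (1 / 2 : ℝ) • a + c with hzp
  set zm : Pt := v + (1 / 2 : ℝ) • a - c with hzm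
  have hzpv : zp - v = (1 / 2 : ℝ) • a + c := by rw [hzp]; abel
  have hzmv : zm - v = (1 / 2 : ℝ) • a - c := by rw [hzm]; abel
  have hic : ⟪c, a⟫ = 0 := by
    rw [hc, real_inner_smul_left, inner_rot90_self, mul_zero]
  have hcc : ⟪c, c⟫ = h ^ 2 := by
    rw [hc, real_inner_smul_left, real_inner_smul_right, inner_rot90_rot90, hda]
    field_simp
  have hsphere : ∀ z : Pt, z - v = (1 / 2 : ℝ) • a + c ∨ z - v = (1 / 2 : ℝ) • a - c →
      dist z v = r := by
    rintro z (hz | hz) <;>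
    · rw [dist_eq_norm, ← Real.sqrt_sq hr.le, ← Real.sqrt_sq (norm_nonneg (z - v))]
      congr 1
      rw [← real_inner_self_eq_norm_sq, hz]
      simp only [inner_add_left, inner_add_right, inner_sub_left, inner_sub_right,
        real_inner_smul_left, real_inner_smul_right, hda, hic, real_inner_comm c a, hic, hcc]
      nlinarith [hh2]
  have hzpS : dist zp v = r := hsphere zp (Or.inl hzpv)
  have hzmS : dist zm v = r := hsphere zm (Or.inr hzmv)
  have hinner_a : ∀ z : Pt, z - v = (1 / 2 : ℝ) • a + c ∨ z - v = (1 / 2 : ℝ) • a - c →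
      ⟪z - v, a⟫ = d ^ 2 / 2 := by
    rintro z (hz | hz) <;>
    · rw [hz]
      simp only [inner_add_left, inner_sub_left, real_inner_smul_left, hda, hic]
      ring
  -- zp, zm are in the arc of u
  have hmem : ∀ z : Pt, z - v = (1 / 2 : ℝ) • a + c ∨ z - v = (1 / 2 : ℝ) • a - c →
      z ∈ Zd r u ∩ Zb r v := by
    intro z hz
    have hzS := hsphere z hz
    refine ⟨?_, hzS⟩
    show dist z u ≤ r
    rw [hkey z u hzS, hinner_a z hz]
    show ‖a‖ ^ 2 ≤ _
    rw [← hdd]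
    linarith [sq_nonneg d]
  have hzp' := hle (hmem zp (Or.inl hzpv))
  have hzm' := hle (hmem zm (Or.inr hzmv))
  have hzpb : d' ^ 2 ≤ 2 * ⟪zp - v, b⟫ := by
    have h3 : dist zp u' ≤ r := hzp'.1
    rw [hkey zp u' hzpS] at h3
    rw [hdd']
    exact h3
  have hzmb : d' ^ 2 ≤ 2 * ⟪zm - v, b⟫ := by
    have h3 : dist zm u' ≤ r := hzm'.1
    rw [hkey zm u' hzmS] at h3
    rw [hdd']
    exact h3
  have hsum : (zp - v) + (zm - v) = a := by
    rw [hzpv, hzmv]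
    module
  have hab : d' ^ 2 ≤ ⟪a, b⟫ := by
    have : ⟪(zp - v) + (zm - v), b⟫ = ⟪zp - v, b⟫ + ⟪zm - v, b⟫ := inner_add_left _ _ _
    rw [hsum] at this
    linarith
  -- strict Cauchy-Schwarz
  have hcs : ⟪a, b⟫ < d * d' := by
    rcases lt_or_eq_of_le (real_inner_le_norm a b) with h1 | h1
    · exact h1
    · exfalso
      apply hcol
      have h2 : d' • a = d • b := (inner_eq_norm_mul_iff_real).mp h1
      apply (collinear_iff_of_mem (Set.mem_insert v _)).mpr
      refine ⟨a, ?_⟩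
      rintro p hp
      simp only [Set.mem_insert_iff, Set.mem_singleton_iff] at hp
      rcases hp with rfl | rfl | rfl
      · exact ⟨0, by simp⟩
      · exact ⟨1, by simp [ha]⟩
      · refine ⟨d' / d, ?_⟩
        have hdne : (d : ℝ) ≠ 0 := hdpos.ne'
        have h4 : b = (d' / d) • a := by
          have h3 : (d : ℝ)⁻¹ • (d' • a) = (d : ℝ)⁻¹ • (d • b) := by rw [h2]
          rw [smul_smul, smul_smul, inv_mul_cancel₀ hdne, one_smul] at h3
          rw [← h3, div_eq_inv_mul]
        rw [vadd_eq_add, ← h4, hb]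
        abel
  have : d' ^ 2 < d * d' := lt_of_le_of_lt hab hcs
  rw [hd, hd']
  nlinarith
end
end

section
/- For two distinct adjacent nodes v and u (i.e., points in the plane with distance at most r, and distance positive), u is a maximal neighbor of v if and only if v is a maximal neighbor of u, where maximality is with respect to the arc-containment partial order among neighbors in a finite point set V in general position. -/
open Metric

noncomputable section

/-!
If `u ∈ N(v)` and `Z(c)` contains the arc `Z(u) ∩ ∂Z(v)`, then `Z(c)` contains its endpoints
`p, q`, the two common points of `∂Z(u)` and `∂Z(v)`; that is, `c` lies in the lens
`Z(p) ∩ Z(q)`. This lens is symmetric in `u` and `v`, it lies in the disk with diameter `[u, v]`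
(so `c` is also a neighbor of `u`), and a computation in the frame `(u - v, (u - v)⊥)` shows that
`Z(c)` then also contains the arc `Z(v) ∩ ∂Z(u)`. So a neighbor dominating `u` at `v` dominates
`v` at `u`, which makes maximality symmetric.
-/

lemma Pt.dist_sq_eq (x y : Pt) : dist x y ^ 2 = (x 0 - y 0) ^ 2 + (x 1 - y 1) ^ 2 := by
  simp only [EuclideanSpace.dist_sq_eq, Fin.sum_univ_two, Real.dist_eq, sq_abs]

lemma dist_midpoint_add_smul_rot90_sq (c v u : Pt) (t : ℝ) :
    dist c (midpoint ℝ v u + t • rot90 (u - v)) ^ 2 =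
      (c 0 - v 0 - (u 0 - v 0) / 2 + t * (u 1 - v 1)) ^ 2 +
        (c 1 - v 1 - (u 1 - v 1) / 2 - t * (u 0 - v 0)) ^ 2 := by
  simp only [Pt.dist_sq_eq, midpoint_eq_smul_add, invOf_eq_inv, smul_add, rot90, PiLp.sub_apply,
    neg_sub, WithLp.equiv_symm_apply, PiLp.add_apply, PiLp.smul_apply, smul_eq_mul,
    Matrix.cons_val_zero, Matrix.cons_val_one, Matrix.cons_val_fin_one]
  ring

lemma midpoint_add_smul_rot90_mem_sphere {r t : ℝ} {v u : Pt} (hr : 0 ≤ r)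
    (ht : t ^ 2 * dist u v ^ 2 = r ^ 2 - dist u v ^ 2 / 4) :
    midpoint ℝ v u + t • rot90 (u - v) ∈ sphere v r ∩ sphere u r := by
  rw [Pt.dist_sq_eq] at ht
  constructor <;>
  · rw [mem_sphere, dist_comm, ← sq_eq_sq₀ dist_nonneg hr, dist_midpoint_add_smul_rot90_sq]
    linarith

lemma dist_le_of_arcLe {r t : ℝ} {v u c : Pt} (hr : 0 ≤ r) (h : arcLe r v u c)
    (ht : t ^ 2 * dist u v ^ 2 = r ^ 2 - dist u v ^ 2 / 4) :
    dist c (midpoint ℝ v u + t • rot90 (u - v)) ≤ r := by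
  obtain ⟨hv, hu⟩ := midpoint_add_smul_rot90_mem_sphere hr ht
  rw [dist_comm]
  exact (h ⟨mem_closedBall.2 (mem_sphere.1 hu).le, hv⟩).1

/-- Coordinates relative to `v`: `w = u - v`, `x = c - v`, and `w / 2 ± s • w⊥` are the endpoints
of the arc `Z(u) ∩ ∂Z(v)`; `hp`, `hq` say that both lie in `Z(x)`. -/
lemma sq_dist_le_of_lens_of_arc {r s w₀ w₁ x₀ x₁ z₀ z₁ : ℝ} (hd : 0 < w₀ ^ 2 + w₁ ^ 2)
    (hs₀ : 0 ≤ s) (hs : s ^ 2 * (w₀ ^ 2 + w₁ ^ 2) = r ^ 2 - (w₀ ^ 2 + w₁ ^ 2) / 4)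
    (hp : x₀ ^ 2 + x₁ ^ 2 - (x₀ * w₀ + x₁ * w₁) ≤ 2 * s * (x₁ * w₀ - x₀ * w₁))
    (hq : x₀ ^ 2 + x₁ ^ 2 - (x₀ * w₀ + x₁ * w₁) ≤ 2 * -s * (x₁ * w₀ - x₀ * w₁))
    (hzu : (z₀ - w₀) ^ 2 + (z₁ - w₁) ^ 2 = r ^ 2) (hzv : z₀ ^ 2 + z₁ ^ 2 ≤ r ^ 2) :
    (z₀ - x₀) ^ 2 + (z₁ - x₁) ^ 2 ≤ r ^ 2 := by
  -- `(A, B)` and `(E, F)` are `d` times the coordinates of `x` and `z - w` in the frame `(w, w⊥)`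
  set d := w₀ ^ 2 + w₁ ^ 2
  set A := x₀ * w₀ + x₁ * w₁
  set B := x₁ * w₀ - x₀ * w₁
  set E := (z₀ - w₀) * w₀ + (z₁ - w₁) * w₁
  set F := (z₁ - w₁) * w₀ - (z₀ - w₀) * w₁
  have hAd : A ≤ d := by
    have : A ^ 2 + B ^ 2 = (x₀ ^ 2 + x₁ ^ 2) * d := by ring
    nlinarith [sq_nonneg B]
  have hE : 2 * E + d ≤ 0 := by linarith
  have hF : -(s * d) ≤ F ∧ F ≤ s * d := by
    have hEF : E ^ 2 + F ^ 2 = r ^ 2 * d := by linear_combination d * hzu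
    refine abs_le_of_sq_le_sq' ?_ (by positivity)
    nlinarith
  have key : d * ((z₀ - x₀) ^ 2 + (z₁ - x₁) ^ 2 - r ^ 2) =
      (2 * E + d) * (d - A) + (d * (x₀ ^ 2 + x₁ ^ 2 - A) - 2 * F * B) := by
    linear_combination d * hzu
  have hfirst : (2 * E + d) * (d - A) ≤ 0 := mul_nonpos_of_nonpos_of_nonneg hE (by linarith)
  have hsecond : d * (x₀ ^ 2 + x₁ ^ 2 - A) - 2 * F * B ≤ 0 := by
    rcases le_total 0 B with hB | hB
    · nlinarith [mul_le_mul_of_nonneg_right hF.1 hB]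
    · nlinarith [mul_le_mul_of_nonpos_right hF.2 hB]
  nlinarith

theorem arcLe_swap {r : ℝ} {v u c : Pt} (hne : u ≠ v) (hd : dist u v ≤ r) (h : arcLe r v u c) :
    arcLe r u v c ∧ dist c u ≤ r := by
  have hr : 0 ≤ r := dist_nonneg.trans hd
  have hpos : 0 < dist u v := dist_pos.2 hne
  set s := √(r ^ 2 - dist u v ^ 2 / 4) / dist u v
  have hs : s ^ 2 * dist u v ^ 2 = r ^ 2 - dist u v ^ 2 / 4 := by
    rw [div_pow, Real.sq_sqrt (by nlinarith), div_mul_cancel₀ _ (by positivity)]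
  have hlens : ∀ t, t ^ 2 * dist u v ^ 2 = r ^ 2 - dist u v ^ 2 / 4 →
      (c 0 - v 0) ^ 2 + (c 1 - v 1) ^ 2 - ((c 0 - v 0) * (u 0 - v 0) + (c 1 - v 1) * (u 1 - v 1)) ≤
        2 * t * ((c 1 - v 1) * (u 0 - v 0) - (c 0 - v 0) * (u 1 - v 1)) := by
    intro t ht
    have hc := pow_le_pow_left₀ dist_nonneg (dist_le_of_arcLe hr h ht) 2
    rw [dist_midpoint_add_smul_rot90_sq] at hc
    rw [Pt.dist_sq_eq] at ht
    linarith
  have hp := hlens s hs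
  have hq := hlens (-s) (by rwa [neg_sq])
  have hd₂ : 0 < (u 0 - v 0) ^ 2 + (u 1 - v 1) ^ 2 := by rw [← Pt.dist_sq_eq]; positivity
  rw [Pt.dist_sq_eq] at hs
  rw [← sq_le_sq₀ dist_nonneg hr, Pt.dist_sq_eq] at hd
  refine ⟨fun z ⟨hzv, hzu⟩ => ⟨?_, hzu⟩, ?_⟩
  · rw [Zd, mem_closedBall, ← sq_le_sq₀ dist_nonneg hr, Pt.dist_sq_eq] at hzv ⊢
    rw [Zb, mem_sphere, ← sq_eq_sq₀ dist_nonneg hr, Pt.dist_sq_eq] at hzu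
    have := sq_dist_le_of_lens_of_arc (z₀ := z 0 - v 0) (z₁ := z 1 - v 1) hd₂ (by positivity)
      hs hp hq (by linarith) hzv
    linarith
  · -- adding `hp` and `hq` puts `c` in the disk with diameter `[v, u]`
    rw [← sq_le_sq₀ dist_nonneg hr, Pt.dist_sq_eq]
    nlinarith [sq_nonneg (c 0 - v 0), sq_nonneg (c 1 - v 1)]

theorem MaxNbr.symm {V : Set Pt} {r : ℝ} {v u : Pt} (hv : v ∈ V) (h : MaxNbr V r v u) :
    MaxNbr V r u v := by
  obtain ⟨-, ⟨hne, hd⟩, hmax⟩ := h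
  refine ⟨hv, ⟨hne.symm, dist_comm u v ▸ hd⟩, fun c hc hcv hcu harc => ?_⟩
  obtain ⟨harc', hcv'⟩ := arcLe_swap hne.symm (dist_comm u v ▸ hd) harc
  exact hmax c hc hcu.1 ⟨hcv, hcv'⟩ harc'

theorem stmt_3_general (V : Set Pt) (r : ℝ) (v u : Pt) (hv : v ∈ V) (hu : u ∈ V) :
    MaxNbr V r v u ↔ MaxNbr V r u v :=
  ⟨MaxNbr.symm hv, MaxNbr.symm hu⟩

/-- Lemma: maximality of neighbors is symmetric. -/
theorem stmt_3 (V : Set Pt) (hV : V.Finite) (hgp : GenPos V) (r : ℝ) (hr : 0 < r)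
    (v u : Pt) (hv : v ∈ V) (hu : u ∈ V) (hne : u ≠ v) (hd : dist u v ≤ r) :
    MaxNbr V r v u ↔ MaxNbr V r u v :=
  stmt_3_general V r v u hv hu
end
end

section
/- If W is a communication wheel of v with rim nodes v₁, ..., v_m, then the boundary circle ∂Z(v) is contained in the union of the disks Z(v₁) ∪ ... ∪ Z(v_m). -/
open Metric

noncomputable section

/-!
Suppose a point `z ∈ ∂Z(v)` lies in no rim disk, and measure angles around `v` so that `z` sits
at `±π`. Each rim disk `Z(vᵢ)` then meets `∂Z(v)` in an interval `[αᵢ - θᵢ, αᵢ + θᵢ]` lying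
strictly inside `(-π, π)`, whose right end is the angle of `CCW(v, vᵢ)`. The wheel condition
`CCW(v, vᵢ) ∈ Z(vᵢ₊₁)` makes these right ends non-decreasing around the cycle, hence all equal.
But then the arc of whichever of `v₀, v₁` has the smaller `θ` lies inside the other's,
contradicting the maximality of the rim nodes.
-/

open Real

lemma ZMod.apply_eq_apply_of_le_apply_add_one {m : ℕ} [NeZero m] {β : Type*} [PartialOrder β]
    {f : ZMod m → β} (h : ∀ i, f i ≤ f (i + 1)) (i j : ZMod m) : f i = f j := by
  have h_le_add (i : ZMod m) (k : ℕ) : f i ≤ f (i + k) := by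
    induction k with
    | zero => simp
    | succ k ih => exact ih.trans (by simpa [add_assoc] using h (i + k))
  have h_le (i j : ZMod m) : f i ≤ f j := by
    simpa using h_le_add i (j - i).val
  exact le_antisymm (h_le i j) (h_le j i)

namespace Real

lemma cos_le_cos_iff_abs_le {θ x : ℝ} (hθ₀ : 0 ≤ θ) (hθ : θ ≤ π) (hx : |x| < 2 * π - θ) :
    cos θ ≤ cos x ↔ |x| ≤ θ := by
  rw [← cos_abs x]
  rcases le_or_gt |x| π with hxπ | hxπ
  · exact strictAntiOn_cos.le_iff_ge ⟨hθ₀, hθ⟩ ⟨abs_nonneg x, hxπ⟩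
  · rw [← cos_two_pi_sub |x|, strictAntiOn_cos.le_iff_ge ⟨hθ₀, hθ⟩ ⟨by linarith, by linarith⟩]
    constructor <;> intro <;> linarith

lemma abs_lt_pi_sub_of_cos_pi_sub_lt {θ α : ℝ} (hθ₀ : 0 ≤ θ) (hθ : θ ≤ π) (hα : |α| ≤ π)
    (h : cos (π - α) < cos θ) : |α| < π - θ := by
  rw [cos_pi_sub, ← cos_abs, ← neg_lt_neg_iff, neg_neg, ← cos_pi_sub] at h
  exact (strictAntiOn_cos.lt_iff_gt ⟨by linarith, by linarith⟩ ⟨abs_nonneg α, hα⟩).mp h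

end Real

namespace Complex

lemma mul_exp_arg_div_mul_I {u y : ℂ} (hu : u ≠ 0) (hy : y ≠ 0) :
    u * exp (arg (y / u) * I) = (‖u‖ / ‖y‖ : ℝ) * y := by
  have h := norm_mul_exp_arg_mul_I (y / u)
  rw [norm_div] at h
  have hu' : (‖u‖ : ℂ) ≠ 0 := by exact_mod_cast norm_ne_zero_iff.mpr hu
  have hy' : (‖y‖ : ℂ) ≠ 0 := by exact_mod_cast norm_ne_zero_iff.mpr hy
  push_cast at h ⊢
  field_simp at h ⊢
  linear_combination h

lemma norm_exp_mul_I_sub_sq (φ α ρ : ℝ) :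
    ‖exp (φ * I) - ρ * exp (α * I)‖ ^ 2 = 1 + ρ ^ 2 - 2 * ρ * Real.cos (φ - α) := by
  rw [Complex.sq_norm, normSq_apply]
  simp only [sub_re, sub_im, mul_re, mul_im, ofReal_re, ofReal_im, exp_ofReal_mul_I_re,
    exp_ofReal_mul_I_im, zero_mul, sub_zero, add_zero, Real.cos_sub]
  linear_combination Real.sin_sq_add_cos_sq φ + ρ ^ 2 * Real.sin_sq_add_cos_sq α

lemma norm_mul_exp_sub_sq {u y : ℂ} (hu : u ≠ 0) (hy : y ≠ 0) (φ : ℝ) :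
    ‖u * exp (φ * I) - y‖ ^ 2 = ‖u‖ ^ 2 + ‖y‖ ^ 2 - 2 * ‖u‖ * ‖y‖ * Real.cos (φ - arg (y / u)) := by
  have hu₀ := norm_pos_iff.mpr hu
  have hy_eq : y = u * ((‖y‖ / ‖u‖ : ℝ) * exp (arg (y / u) * I)) := by
    have hy₀ : (‖y‖ : ℂ) ≠ 0 := by exact_mod_cast (norm_pos_iff.mpr hy).ne'
    rw [mul_left_comm, mul_exp_arg_div_mul_I hu hy, ← mul_assoc, ← ofReal_mul,
      div_mul_div_cancel₀ hu₀.ne']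
    push_cast
    field_simp
  conv_lhs => rw [hy_eq, ← mul_sub, norm_mul, mul_pow, norm_exp_mul_I_sub_sq]
  field_simp

lemma norm_mul_exp_sub_le_norm_iff {u y : ℂ} (hu : u ≠ 0) (hy : y ≠ 0) (φ : ℝ) :
    ‖u * exp (φ * I) - y‖ ≤ ‖u‖ ↔ ‖y‖ ≤ 2 * ‖u‖ * Real.cos (φ - arg (y / u)) := by
  have hsq := norm_mul_exp_sub_sq hu hy φ
  have hu₀ := norm_pos_iff.mpr hu
  have hy₀ := norm_pos_iff.mpr hy
  rw [← sq_le_sq₀ (norm_nonneg _) hu₀.le, hsq]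
  constructor <;> intro h <;> nlinarith

end Complex

def toC : Pt ≃ₗᵢ[ℝ] ℂ := Complex.orthonormalBasisOneI.repr.symm

lemma toC_rot90 (x : Pt) : toC (rot90 x) = Complex.I * toC x := by
  simp only [toC, Complex.orthonormalBasisOneI_repr_symm_apply, rot90]
  apply Complex.ext <;> simp

lemma dist_eq_norm_toC_sub (p q : Pt) : dist p q = ‖toC p - toC q‖ := by
  rw [← dist_eq_norm, toC.dist_map]

lemma mem_Zd_iff_norm_toC_sub {r : ℝ} {p x : Pt} : x ∈ Zd r p ↔ ‖toC x - toC p‖ ≤ r := by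
  rw [Zd, mem_closedBall, dist_eq_norm_toC_sub]

lemma mem_Zb_iff_norm_toC_sub {r : ℝ} {p x : Pt} : x ∈ Zb r p ↔ ‖toC x - toC p‖ = r := by
  rw [Zb, mem_sphere, dist_eq_norm_toC_sub]

section Arcs

variable {r : ℝ} {v z p x : Pt} {φ : ℝ}

/-- The angle of `x` seen from `v`, measured from the point antipodal to `z`, so that `z` itself
sits at angle `π`. -/
def angleAround (v z x : Pt) : ℝ := Complex.arg ((toC x - toC v) / (toC v - toC z))

/-- `Z(p) ∩ ∂Z(v)` is the arc of this angular radius around the direction of `p`. -/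
def arcHalfAngle (r : ℝ) (v p : Pt) : ℝ := Real.arccos (dist v p / (2 * r))

lemma arcHalfAngle_nonneg : 0 ≤ arcHalfAngle r v p := Real.arccos_nonneg _

lemma arcHalfAngle_le_pi : arcHalfAngle r v p ≤ π := Real.arccos_le_pi _

lemma norm_toC_sub_of_mem_Zb (hz : z ∈ Zb r v) : ‖toC v - toC z‖ = r := by
  rw [← norm_neg, neg_sub, mem_Zb_iff_norm_toC_sub.mp hz]

lemma toC_sub_ne_zero_of_mem_Zb (hr : 0 < r) (hz : z ∈ Zb r v) : toC v - toC z ≠ 0 :=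
  norm_ne_zero_iff.mp ((norm_toC_sub_of_mem_Zb hz).symm ▸ hr.ne')

lemma toC_sub_ne_zero_of_nbr (hp : Nbr r v p) : toC p - toC v ≠ 0 :=
  sub_ne_zero.mpr (toC.injective.ne hp.1)

lemma cos_arcHalfAngle (hr : 0 < r) (hp : Nbr r v p) :
    cos (arcHalfAngle r v p) = dist v p / (2 * r) := by
  have hd₀ : 0 ≤ dist v p / (2 * r) := by positivity
  have hd₁ : dist v p / (2 * r) ≤ 1 := by
    rw [div_le_one (by positivity), dist_comm]
    linarith [hp.2]
  exact cos_arccos (by linarith) hd₁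

lemma toC_eq_of_mem_Zb (hr : 0 < r) (hz : z ∈ Zb r v) (hx : x ∈ Zb r v) :
    toC x = toC v + (toC v - toC z) * Complex.exp (angleAround v z x * Complex.I) := by
  have hx' := mem_Zb_iff_norm_toC_sub.mp hx
  have hx₀ : toC x - toC v ≠ 0 := norm_ne_zero_iff.mp (hx'.symm ▸ hr.ne')
  rw [angleAround, Complex.mul_exp_arg_div_mul_I (toC_sub_ne_zero_of_mem_Zb hr hz) hx₀,
    norm_toC_sub_of_mem_Zb hz, hx', div_self hr.ne', Complex.ofReal_one, one_mul, add_sub_cancel]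

lemma toC_eq_exp_pi_mul_I : toC z = toC v + (toC v - toC z) * Complex.exp (π * Complex.I) := by
  rw [Complex.exp_pi_mul_I]
  ring

lemma mem_Zd_iff_cos_le (hr : 0 < r) (hz : z ∈ Zb r v) (hp : Nbr r v p)
    (hx : toC x = toC v + (toC v - toC z) * Complex.exp (φ * Complex.I)) :
    x ∈ Zd r p ↔ cos (arcHalfAngle r v p) ≤ cos (φ - angleAround v z p) := by
  have hu := norm_toC_sub_of_mem_Zb hz
  have hsub : toC x - toC p = (toC v - toC z) * Complex.exp (φ * Complex.I) - (toC p - toC v) := by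
    rw [hx]; ring
  rw [mem_Zd_iff_norm_toC_sub, hsub, ← hu, Complex.norm_mul_exp_sub_le_norm_iff
    (toC_sub_ne_zero_of_mem_Zb hr hz) (toC_sub_ne_zero_of_nbr hp), hu, ← dist_eq_norm_toC_sub,
    dist_comm, cos_arcHalfAngle hr hp, div_le_iff₀ (by positivity), mul_comm,
    angleAround]

def ccwAngle (r : ℝ) (v z p : Pt) : ℝ := angleAround v z p + arcHalfAngle r v p

lemma abs_angleAround_lt (hr : 0 < r) (hz : z ∈ Zb r v) (hp : Nbr r v p) (hzp : z ∉ Zd r p) :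
    |angleAround v z p| < π - arcHalfAngle r v p :=
  abs_lt_pi_sub_of_cos_pi_sub_lt arcHalfAngle_nonneg arcHalfAngle_le_pi (Complex.abs_arg_le_pi _)
    (not_le.mp fun h => hzp ((mem_Zd_iff_cos_le hr hz hp toC_eq_exp_pi_mul_I).mpr h))

lemma mem_Zd_iff_abs_sub_le (hr : 0 < r) (hz : z ∈ Zb r v) (hp : Nbr r v p) (hzp : z ∉ Zd r p)
    (hφ : |φ| ≤ π) (hx : toC x = toC v + (toC v - toC z) * Complex.exp (φ * Complex.I)) :
    x ∈ Zd r p ↔ |φ - angleAround v z p| ≤ arcHalfAngle r v p := by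
  rw [mem_Zd_iff_cos_le hr hz hp hx]
  refine cos_le_cos_iff_abs_le arcHalfAngle_nonneg arcHalfAngle_le_pi ?_
  have := abs_angleAround_lt hr hz hp hzp
  calc |φ - angleAround v z p| ≤ |φ| + |angleAround v z p| := abs_sub _ _
    _ < 2 * π - arcHalfAngle r v p := by linarith

lemma abs_ccwAngle_le (hr : 0 < r) (hz : z ∈ Zb r v) (hp : Nbr r v p) (hzp : z ∉ Zd r p) :
    |ccwAngle r v z p| ≤ π := by
  have := abs_lt.mp (abs_angleAround_lt hr hz hp hzp)
  have : 0 ≤ arcHalfAngle r v p := arcHalfAngle_nonneg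
  rw [ccwAngle, abs_le]
  constructor <;> linarith

lemma toC_ccwPt (hr : 0 < r) (hz : z ∈ Zb r v) (hp : Nbr r v p) :
    toC (ccwPt r v p) =
      toC v + (toC v - toC z) * Complex.exp (ccwAngle r v z p * Complex.I) := by
  have hd₀ : 0 < dist v p := dist_pos.mpr (Ne.symm hp.1)
  have hcos : r * cos (arcHalfAngle r v p) = dist v p / 2 := by
    rw [cos_arcHalfAngle hr hp]
    field_simp
  have hsin : r * sin (arcHalfAngle r v p) = √(r ^ 2 - (dist v p / 2) ^ 2) := by
    have : r ^ 2 - (dist v p / 2) ^ 2 = r ^ 2 * (1 - (dist v p / (2 * r)) ^ 2) := by field_simp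
    rw [arcHalfAngle, sin_arccos, this, Real.sqrt_mul (sq_nonneg r), Real.sqrt_sq hr.le]
  have hexp : (r : ℂ) * Complex.exp (arcHalfAngle r v p * Complex.I) =
      (dist v p / 2 : ℝ) + (√(r ^ 2 - (dist v p / 2) ^ 2) : ℝ) * Complex.I := by
    rw [← hsin, ← hcos, Complex.exp_mul_I]
    push_cast
    ring
  have hdir : (toC v - toC z) * Complex.exp (angleAround v z p * Complex.I) =
      (r / dist v p : ℝ) * (toC p - toC v) := by
    rw [angleAround, Complex.mul_exp_arg_div_mul_I (toC_sub_ne_zero_of_mem_Zb hr hz)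
      (toC_sub_ne_zero_of_nbr hp), norm_toC_sub_of_mem_Zb hz, dist_comm, dist_eq_norm_toC_sub]
  have hmid : toC (midpoint ℝ v p) = (toC v + toC p) / 2 := by
    rw [midpoint_eq_smul_add, map_smul, map_add, invOf_eq_inv, Complex.real_smul]
    push_cast
    ring
  rw [ccwPt, map_add, hmid, map_smul, toC_rot90, map_sub, ccwAngle, Complex.ofReal_add, add_mul,
    Complex.exp_add, ← mul_assoc, hdir, Complex.real_smul]
  generalize √(r ^ 2 - (dist v p / 2) ^ 2) = s at hexp ⊢
  generalize Complex.exp (arcHalfAngle r v p * Complex.I) = E at hexp ⊢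
  have hr' : (r : ℂ) ≠ 0 := by exact_mod_cast hr.ne'
  have hd' : (dist v p : ℂ) ≠ 0 := by exact_mod_cast hd₀.ne'
  push_cast at hexp ⊢
  field_simp
  linear_combination 2 * (toC v - toC p) * hexp

lemma ccwAngle_le_of_ccwPt_mem {a b : Pt} (hr : 0 < r) (hz : z ∈ Zb r v) (ha : Nbr r v a)
    (hb : Nbr r v b) (hza : z ∉ Zd r a) (hzb : z ∉ Zd r b) (h : ccwPt r v a ∈ Zd r b) :
    ccwAngle r v z a ≤ ccwAngle r v z b := by
  rw [mem_Zd_iff_abs_sub_le hr hz hb hzb (abs_ccwAngle_le hr hz ha hza) (toC_ccwPt hr hz ha)] at h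
  show ccwAngle r v z a ≤ angleAround v z b + arcHalfAngle r v b
  linarith [(abs_le.mp h).2]

lemma arcLe_of_ccwAngle_eq {a b : Pt} (hr : 0 < r) (hz : z ∈ Zb r v) (ha : Nbr r v a)
    (hb : Nbr r v b) (hza : z ∉ Zd r a) (hzb : z ∉ Zd r b)
    (hccw : ccwAngle r v z a = ccwAngle r v z b) (hle : arcHalfAngle r v a ≤ arcHalfAngle r v b) :
    arcLe r v a b := by
  rintro x ⟨hxa, hxv⟩
  have hx := toC_eq_of_mem_Zb hr hz hxv
  have hφ : |angleAround v z x| ≤ π := Complex.abs_arg_le_pi _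
  rw [mem_Zd_iff_abs_sub_le hr hz ha hza hφ hx, abs_le] at hxa
  refine ⟨(mem_Zd_iff_abs_sub_le hr hz hb hzb hφ hx).mpr (abs_le.mpr ?_), hxv⟩
  unfold ccwAngle at hccw
  constructor <;> linarith [hxa.1, hxa.2]

end Arcs

theorem stmt_9_general (V : Set Pt) (r : ℝ) (hr : 0 < r)
    (v : Pt) (m : ℕ) (w : ZMod m → Pt) (hw : IsCommWheel V r v m w) :
    Zb r v ⊆ ⋃ i, Zd r (w i) := by
  obtain ⟨hm, hinj, hmax, -, hccw⟩ := hw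
  have : Fact (1 < m) := ⟨by omega⟩
  intro z hz
  by_contra hcov
  simp only [Set.mem_iUnion, not_exists] at hcov
  have hnbr (i : ZMod m) : Nbr r v (w i) := (hmax i).2.1
  have hccw_const (i j : ZMod m) : ccwAngle r v z (w i) = ccwAngle r v z (w j) :=
    ZMod.apply_eq_apply_of_le_apply_add_one (fun i => ccwAngle_le_of_ccwPt_mem hr hz (hnbr i)
      (hnbr (i + 1)) (hcov i) (hcov (i + 1)) (hccw i).1) i j
  have hnot_le (i j : ZMod m) (hij : i ≠ j) : ¬ arcHalfAngle r v (w i) ≤ arcHalfAngle r v (w j) :=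
    fun hle => (hmax i).2.2 (w j) (hmax j).1 (hinj.ne hij.symm) (hnbr j)
      (arcLe_of_ccwAngle_eq hr hz (hnbr i) (hnbr j) (hcov i) (hcov j) (hccw_const i j) hle)
  rcases le_total (arcHalfAngle r v (w 0)) (arcHalfAngle r v (w 1)) with h | h
  · exact hnot_le 0 1 zero_ne_one h
  · exact hnot_le 1 0 one_ne_zero h

/-- Lemma: the rim disks of a communication wheel cover `∂Z(v)`. -/
theorem stmt_9 (V : Set Pt) (hV : V.Finite) (hgp : GenPos V) (r : ℝ) (hr : 0 < r)
    (v : Pt) (m : ℕ) (w : ZMod m → Pt) (hw : IsCommWheel V r v m w) :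
    Zb r v ⊆ ⋃ i, Zd r (w i) :=
  stmt_9_general V r hr v m w hw
end
end

section
/- Let v be an interior node with communication wheel W having rim nodes v₁, ..., v_m. If u is a neighbor of v (0 < d(u,v) ≤ r) and u is not a rim node of W, then u is adjacent to some rim node of W, i.e., d(u, v_i) ≤ r for some i. -/
open Metric

noncomputable section

/-!
Suppose `u` is farther than `r` from every rim node and let `z` be the point of `∂Z(v)` in the
direction of `u`. Each disk `Z(wᵢ)` is convex and contains `v`, so it misses `z` as well. Measuring
angles around `v` in `[β, β + 2π)`, where `β` is the direction of `z`, each arc `Z(wᵢ) ∩ ∂Z(v)` is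
then an honest interval `[γᵢ - αᵢ, γᵢ + αᵢ]`. The wheel conditions put the CCW endpoint of arc `i`
into arc `i + 1` and the CW endpoint of arc `i + 1` into arc `i`, so both endpoints increase weakly
around the cycle and are therefore constant. All arcs coincide, hence so do all rim nodes,
contradicting the injectivity of the rim.
-/

open Complex Set
open scoped Real

theorem eq_of_le_comp_perm {α β : Type*} [Fintype α] [AddCommMonoid β] [PartialOrder β]
    [IsOrderedCancelAddMonoid β] {g : α → β} (σ : Equiv.Perm α) (h : ∀ i, g i ≤ g (σ i))
    (i : α) : g (σ i) = g i :=
  ((Finset.sum_eq_sum_iff_of_le fun i _ => h i).1 (Equiv.sum_comp σ g).symm i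
    (Finset.mem_univ i)).symm

theorem mem_closedBall_of_smul_mem {E : Type*} [SeminormedAddCommGroup E] [NormedSpace ℝ E]
    {x y : E} {t ε : ℝ} (ht : 1 ≤ t) (h0 : (0 : E) ∈ closedBall y ε)
    (h : t • x ∈ closedBall y ε) : x ∈ closedBall y ε := by
  have hx : x = t⁻¹ • t • x := by rw [inv_smul_smul₀ (by positivity)]
  rw [hx]
  exact (convex_closedBall y ε).smul_mem_of_zero_mem h0 h
    ⟨by positivity, inv_le_one_of_one_le₀ ht⟩

namespace Real

theorem le_cos_of_abs_le_arccos {c x : ℝ} (hc₁ : -1 ≤ c) (hc₂ : c ≤ 1) (hx : |x| ≤ arccos c) :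
    c ≤ cos x := by
  rw [← cos_abs]
  calc c = cos (arccos c) := (cos_arccos hc₁ hc₂).symm
    _ ≤ cos |x| := cos_le_cos_of_nonneg_of_le_pi (abs_nonneg x) (arccos_le_pi c) hx

theorem abs_le_arccos_of_le_cos {c x : ℝ} (hc : c ≤ cos x) (hx : |x| < 2 * π - arccos c) :
    |x| ≤ arccos c := by
  rw [← cos_abs] at hc
  have harccos := arccos_nonneg c
  rcases le_or_gt |x| π with hπ | hπ
  · calc |x| = arccos (cos |x|) := (arccos_cos (abs_nonneg x) hπ).symm
      _ ≤ arccos c := arccos_le_arccos hc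
  · have : 2 * π - |x| ≤ arccos c :=
      calc 2 * π - |x| = arccos (cos (2 * π - |x|)) :=
            (arccos_cos (by linarith) (by linarith)).symm
        _ ≤ arccos c := arccos_le_arccos (by rwa [cos_two_pi_sub])
    linarith

end Real

theorem Complex.norm_mul_exp_sub_mul_exp_sq (r d θ γ : ℝ) :
    ‖(r : ℂ) * exp (θ * I) - d * exp (γ * I)‖ ^ 2 =
      r ^ 2 + d ^ 2 - 2 * r * d * Real.cos (θ - γ) := by
  rw [Complex.sq_norm, normSq_apply]
  simp only [exp_mul_I, sub_re, sub_im, mul_re, mul_im, add_re, add_im, ofReal_re, ofReal_im,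
    I_re, I_im, cos_ofReal_re, sin_ofReal_re, cos_ofReal_im, sin_ofReal_im, Real.cos_sub]
  nlinarith [Real.sin_sq_add_cos_sq θ, Real.sin_sq_add_cos_sq γ]

theorem Complex.norm_mul_exp_sub_mul_exp_le_iff {r d θ γ : ℝ} (hr : 0 < r) (hd : 0 < d) :
    ‖(r : ℂ) * exp (θ * I) - d * exp (γ * I)‖ ≤ r ↔ d / (2 * r) ≤ Real.cos (θ - γ) := by
  rw [← sq_le_sq₀ (norm_nonneg _) hr.le, norm_mul_exp_sub_mul_exp_sq, div_le_iff₀ (by positivity)]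
  constructor <;> intro h <;> nlinarith

/-- `halfAngle r d` is half the angle at `v` of the arc `Z(p) ∩ ∂Z(v)` when `dist v p = d`. -/
def halfAngle (r d : ℝ) : ℝ := Real.arccos (d / (2 * r))

theorem cos_halfAngle {r d : ℝ} (hd : 0 < d) (hdr : d ≤ 2 * r) :
    Real.cos (halfAngle r d) = d / (2 * r) :=
  Real.cos_arccos (by linarith [div_nonneg hd.le (by linarith : (0:ℝ) ≤ 2 * r)])
    ((div_le_one (by linarith)).2 hdr)

theorem ofReal_mul_half_add_chord_mul_I {r d : ℝ} (hd : 0 < d) (hdr : d ≤ 2 * r) :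
    (d : ℂ) * (1 / 2 + (√(r ^ 2 - (d / 2) ^ 2) / d : ℝ) * I) = r * exp (halfAngle r d * I) := by
  have hr : 0 < r := by linarith
  have hsin : r * Real.sin (halfAngle r d) = √(r ^ 2 - (d / 2) ^ 2) := by
    have : r ^ 2 - (d / 2) ^ 2 = r ^ 2 * (1 - (d / (2 * r)) ^ 2) := by field_simp
    rw [halfAngle, Real.sin_arccos, this, Real.sqrt_mul (sq_nonneg r), Real.sqrt_sq hr.le]
  rw [exp_mul_I, ← ofReal_cos, ← ofReal_sin, cos_halfAngle hd hdr, ← hsin]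
  have hd' : (d : ℂ) ≠ 0 := by exact_mod_cast hd.ne'
  have hr' : (r : ℂ) ≠ 0 := by exact_mod_cast hr.ne'
  push_cast
  field_simp

theorem ofReal_mul_half_sub_chord_mul_I {r d : ℝ} (hd : 0 < d) (hdr : d ≤ 2 * r) :
    (d : ℂ) * (1 / 2 - (√(r ^ 2 - (d / 2) ^ 2) / d : ℝ) * I) = r * exp (-halfAngle r d * I) := by
  have h := congrArg (starRingEnd ℂ) (ofReal_mul_half_add_chord_mul_I hd hdr)
  simp only [map_mul, map_add, conj_ofReal, conj_I, ← exp_conj, map_div₀, map_one, map_ofNat] at h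
  rw [neg_mul, ← mul_neg]
  linear_combination h

def toComplex : Pt ≃ₗᵢ[ℝ] ℂ := Complex.orthonormalBasisOneI.repr.symm

theorem toComplex_apply (x : Pt) : toComplex x = x 0 + x 1 * I :=
  Complex.orthonormalBasisOneI_repr_symm_apply x

theorem toComplex_rot90 (x : Pt) : toComplex (rot90 x) = I * toComplex x := by
  simp only [toComplex_apply, rot90, WithLp.equiv_symm_apply, Matrix.cons_val_zero,
    Matrix.cons_val_one]
  push_cast
  linear_combination -(x 1 : ℂ) * I_sq

theorem dist_eq_norm_toComplex_sub_sub (x y v : Pt) :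
    dist x y = ‖toComplex (x - v) - toComplex (y - v)‖ := by
  rw [← map_sub, sub_sub_sub_cancel_right, LinearIsometryEquiv.norm_map, dist_eq_norm]

theorem norm_toComplex_sub (p v : Pt) : ‖toComplex (p - v)‖ = dist v p := by
  rw [LinearIsometryEquiv.norm_map, ← dist_eq_norm, dist_comm]

theorem toComplex_ccwPt_sub (r : ℝ) (v p : Pt) :
    toComplex (ccwPt r v p - v) =
      toComplex (p - v) * (1 / 2 + (√(r ^ 2 - (dist v p / 2) ^ 2) / dist v p : ℝ) * I) := by
  rw [ccwPt, add_sub_right_comm, midpoint_sub_left, map_add,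
    map_smul, map_smul, toComplex_rot90, invOf_eq_inv, real_smul, real_smul]
  push_cast
  ring

theorem toComplex_cwPt_sub (r : ℝ) (v p : Pt) :
    toComplex (cwPt r v p - v) =
      toComplex (p - v) * (1 / 2 - (√(r ^ 2 - (dist v p / 2) ^ 2) / dist v p : ℝ) * I) := by
  rw [cwPt, sub_right_comm, midpoint_sub_left, map_sub,
    map_smul, map_smul, toComplex_rot90, invOf_eq_inv, real_smul, real_smul]
  push_cast
  ring

theorem toComplex_ccwPt_sub_eq_exp {r : ℝ} {v p : Pt} (hp : 0 < dist v p)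
    (hpr : dist v p ≤ 2 * r) :
    toComplex (ccwPt r v p - v) =
      r * exp ((arg (toComplex (p - v)) + halfAngle r (dist v p)) * I) := by
  rw [toComplex_ccwPt_sub]
  conv_lhs => rw [← norm_mul_exp_arg_mul_I (toComplex (p - v))]
  rw [norm_toComplex_sub, mul_right_comm, ofReal_mul_half_add_chord_mul_I hp hpr, mul_assoc,
    ← exp_add]
  congr 2
  ring

theorem toComplex_cwPt_sub_eq_exp {r : ℝ} {v p : Pt} (hp : 0 < dist v p)
    (hpr : dist v p ≤ 2 * r) :
    toComplex (cwPt r v p - v) =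
      r * exp ((arg (toComplex (p - v)) - halfAngle r (dist v p)) * I) := by
  rw [toComplex_cwPt_sub]
  conv_lhs => rw [← norm_mul_exp_arg_mul_I (toComplex (p - v))]
  rw [norm_toComplex_sub, mul_right_comm, ofReal_mul_half_sub_chord_mul_I hp hpr, mul_assoc,
    ← exp_add]
  congr 2
  ring

section Arcs

variable {r d β γ θ : ℝ}

theorem lt_sub_halfAngle_and_add_halfAngle_lt (hd : 0 < d) (hdr : d ≤ 2 * r)
    (hγ : γ ∈ Ico β (β + 2 * π)) (hfar : r < ‖(r : ℂ) * exp (β * I) - d * exp (γ * I)‖) :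
    β < γ - halfAngle r d ∧ γ + halfAngle r d < β + 2 * π := by
  have hr : 0 < r := by linarith
  have hc : -1 ≤ d / (2 * r) := by linarith [div_pos hd (by linarith : (0:ℝ) < 2 * r)]
  have hc' : d / (2 * r) ≤ 1 := (div_le_one (by linarith)).2 hdr
  have hnear : ∀ θ : ℝ, |θ - γ| ≤ halfAngle r d →
      ‖(r : ℂ) * exp (θ * I) - d * exp (γ * I)‖ ≤ r := fun θ h =>
    (norm_mul_exp_sub_mul_exp_le_iff hr hd).2 (Real.le_cos_of_abs_le_arccos hc hc' h)
  constructor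
  · by_contra! h
    refine hfar.not_ge (hnear β ?_)
    rw [abs_sub_comm, abs_of_nonneg (by linarith [hγ.1])]
    linarith
  · by_contra! h
    refine hfar.not_ge ?_
    rw [show exp (β * I) = exp (↑(β + 2 * π) * I) by
      push_cast; exact (exp_mul_I_periodic β).symm]
    exact hnear _ (by rw [abs_of_nonneg (by linarith [hγ.2])]; linarith)

theorem abs_sub_le_halfAngle_of_norm_sub_le (hr : 0 < r) (hd : 0 < d)
    (hβγ : β < γ - halfAngle r d) (hγβ : γ + halfAngle r d < β + 2 * π)
    (hθ : θ ∈ Icc β (β + 2 * π)) (h : ‖(r : ℂ) * exp (θ * I) - d * exp (γ * I)‖ ≤ r) :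
    |θ - γ| ≤ halfAngle r d := by
  unfold halfAngle at hβγ hγβ ⊢
  exact Real.abs_le_arccos_of_le_cos ((norm_mul_exp_sub_mul_exp_le_iff hr hd).1 h)
    (abs_lt.2 ⟨by linarith [hθ.1], by linarith [hθ.2]⟩)

end Arcs

theorem norm_pos_of_lt_norm_exp_sub {r β : ℝ} {q : ℂ} (hqr : ‖q‖ ≤ 2 * r)
    (h : r < ‖(r : ℂ) * exp (β * I) - q‖) : 0 < ‖q‖ := by
  refine norm_pos_iff.2 fun hq => ?_
  rw [hq, norm_zero] at hqr
  rw [hq, sub_zero, norm_mul, norm_exp_ofReal_mul_I, mul_one, norm_real,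
    Real.norm_of_nonneg (by linarith)] at h
  exact h.false

theorem exp_toIcoMod_add_mul_I (β a : ℝ) (x : ℂ) :
    exp ((toIcoMod Real.two_pi_pos β a + x) * I) = exp ((a + x) * I) := by
  rw [toIcoMod, zsmul_eq_mul]
  push_cast
  exact (exp_mul_I_periodic.add_const x).sub_int_mul_eq _

theorem arc_chain_apply_eq {ι : Type*} [Fintype ι] (σ : Equiv.Perm ι) {r β : ℝ} {q : ι → ℂ}
    (hqr : ∀ i, ‖q i‖ ≤ 2 * r) (hfar : ∀ i, r < ‖(r : ℂ) * exp (β * I) - q i‖)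
    (hccw : ∀ i, ‖(r : ℂ) * exp ((arg (q i) + halfAngle r ‖q i‖) * I) - q (σ i)‖ ≤ r)
    (hcw : ∀ i, ‖(r : ℂ) * exp ((arg (q (σ i)) - halfAngle r ‖q (σ i)‖) * I) - q i‖ ≤ r)
    (i : ι) : q (σ i) = q i := by
  have hq0 : ∀ i, 0 < ‖q i‖ := fun i => norm_pos_of_lt_norm_exp_sub (hqr i) (hfar i)
  have hr : 0 < r := by linarith [hqr i, hq0 i]
  set α : ι → ℝ := fun i => halfAngle r ‖q i‖
  -- lift the arguments to `[β, β + 2π)`, where every arc is an honest interval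
  set γ : ι → ℝ := fun i => toIcoMod Real.two_pi_pos β (arg (q i))
  have hexp : ∀ i (x : ℂ), exp ((γ i + x) * I) = exp ((arg (q i) + x) * I) := fun i x =>
    exp_toIcoMod_add_mul_I β _ x
  have hpolar : ∀ i, q i = ‖q i‖ * exp (γ i * I) := fun i => by
    rw [← add_zero (γ i : ℂ), hexp, add_zero, norm_mul_exp_arg_mul_I]
  have hα : ∀ i, 0 ≤ α i := fun i => Real.arccos_nonneg _
  have hwin : ∀ i, β < γ i - α i ∧ γ i + α i < β + 2 * π := fun i =>
    lt_sub_halfAngle_and_add_halfAngle_lt (hq0 i) (hqr i) (toIcoMod_mem_Ico _ _ _)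
      (by rw [← hpolar]; exact hfar i)
  have hupper : ∀ i, γ i + α i ≤ γ (σ i) + α (σ i) := fun i => by
    have h := abs_sub_le_halfAngle_of_norm_sub_le hr (hq0 (σ i)) (hwin (σ i)).1 (hwin (σ i)).2
      (θ := γ i + α i) ⟨by linarith [(hwin i).1, hα i], (hwin i).2.le⟩
      (by rw [← hpolar, ofReal_add, hexp]; exact hccw i)
    linarith [(abs_le.1 h).2]
  have hlower : ∀ i, γ i - α i ≤ γ (σ i) - α (σ i) := fun i => by
    have h := abs_sub_le_halfAngle_of_norm_sub_le hr (hq0 i) (hwin i).1 (hwin i).2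
      (θ := γ (σ i) - α (σ i)) ⟨(hwin (σ i)).1.le, by linarith [(hwin (σ i)).2, hα (σ i)]⟩
      (by
        rw [← hpolar, ofReal_sub, sub_eq_add_neg (γ (σ i) : ℂ), hexp, ← sub_eq_add_neg]
        exact hcw i)
    linarith [(abs_le.1 h).1]
  have hup := eq_of_le_comp_perm σ hupper i
  have hlow := eq_of_le_comp_perm σ hlower i
  have hγ : γ (σ i) = γ i := by linarith
  have hnorm : ‖q (σ i)‖ = ‖q i‖ := by
    have h := congrArg Real.cos (show α (σ i) = α i by linarith)
    rwa [cos_halfAngle (hq0 _) (hqr _), cos_halfAngle (hq0 _) (hqr _),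
      div_left_inj' (by positivity)] at h
  rw [hpolar (σ i), hpolar i, hnorm, hγ]

theorem lt_norm_exp_arg_sub_of_lt_dist {r : ℝ} {u v x : Pt} (hu : u ≠ v) (hur : dist u v ≤ r)
    (hx : dist v x ≤ r) (h : r < dist u x) :
    r < ‖(r : ℂ) * exp (arg (toComplex (u - v)) * I) - toComplex (x - v)‖ := by
  set z := toComplex (u - v)
  have hz : 0 < ‖z‖ := by rw [norm_toComplex_sub]; exact dist_pos.2 hu.symm
  have hzr : (r / ‖z‖) • z = r * exp (arg z * I) :=
    calc (r / ‖z‖) • z = (r / ‖z‖) • (‖z‖ * exp (arg z * I)) := by rw [norm_mul_exp_arg_mul_I]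
      _ = r * exp (arg z * I) := by
        rw [real_smul, ← mul_assoc, ← ofReal_mul, div_mul_cancel₀ r hz.ne']
  by_contra! hle
  refine h.not_ge ?_
  rw [dist_eq_norm_toComplex_sub_sub u x v, ← mem_closedBall_iff_norm]
  refine mem_closedBall_of_smul_mem (t := r / ‖z‖) ?_ ?_ ?_
  · rwa [le_div_iff₀ hz, one_mul, norm_toComplex_sub, dist_comm]
  · rwa [mem_closedBall_iff_norm, zero_sub, norm_neg, norm_toComplex_sub]
  · rwa [mem_closedBall_iff_norm, hzr]

theorem stmt_10_general (V : Set Pt) (r : ℝ)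
    (v : Pt) (m : ℕ) (w : ZMod m → Pt) (hw : IsCommWheel V r v m w)
    (u : Pt) (hnbr : Nbr r v u) :
    ∃ i, dist u (w i) ≤ r := by
  obtain ⟨hm, hinj, hmax, -, hwheel⟩ := hw
  by_contra! hfar
  have : NeZero m := ⟨by omega⟩
  have : Fact (1 < m) := ⟨by omega⟩
  have hrim : ∀ i, 0 < dist v (w i) ∧ dist v (w i) ≤ r := fun i =>
    ⟨dist_pos.2 (hmax i).2.1.1.symm, dist_comm v (w i) ▸ (hmax i).2.1.2⟩
  have hrim2 : ∀ i, dist v (w i) ≤ 2 * r := fun i => by linarith [(hrim i).1, (hrim i).2]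
  have hq := arc_chain_apply_eq (Equiv.addRight 1) (r := r) (β := arg (toComplex (u - v)))
    (q := fun i => toComplex (w i - v)) (fun i => norm_toComplex_sub _ _ ▸ hrim2 i)
    (fun i => lt_norm_exp_arg_sub_of_lt_dist hnbr.1 hnbr.2 (hrim i).2 (hfar i))
    (fun i => by
      rw [norm_toComplex_sub, ← toComplex_ccwPt_sub_eq_exp (hrim i).1 (hrim2 i),
        ← dist_eq_norm_toComplex_sub_sub]
      exact (hwheel i).1)
    (fun i => by
      rw [norm_toComplex_sub, ← toComplex_cwPt_sub_eq_exp (hrim _).1 (hrim2 _),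
        ← dist_eq_norm_toComplex_sub_sub]
      simpa only [Equiv.coe_addRight, add_sub_cancel_right, Zd, mem_closedBall]
        using (hwheel (i + 1)).2)
    0
  have h10 : w (0 + 1) = w 0 := sub_left_injective (toComplex.injective hq)
  rw [zero_add] at h10
  exact one_ne_zero (hinj h10)

/-- Lemma: every neighbor of `v` is a rim node or adjacent to a rim node. -/
theorem stmt_10 (V : Set Pt) (hV : V.Finite) (hgp : GenPos V) (r : ℝ) (hr : 0 < r)
    (v : Pt) (hv : v ∈ V) (hint : IsInterior V r v)
    (m : ℕ) (w : ZMod m → Pt) (hw : IsCommWheel V r v m w)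
    (u : Pt) (hu : u ∈ V) (hnbr : Nbr r v u) (hnotrim : ∀ i, w i ≠ u) :
    ∃ i, dist u (w i) ≤ r :=
  stmt_10_general V r v m w hw u hnbr
end
end

section
/- Let G₁ and G₂ be graphs in ℝ² (on vertex sets that may overlap) sharing at least three common vertices, and let p be a generic framework of G₁ ∪ G₂. If every framework of G₁ equivalent to the restriction of p to G₁ is congruent to it, and likewise for G₂, and the points of p at three common vertices are non-collinear, then any framework of G₁ ∪ G₂ equivalent to p is congruent to p. -/
open Metric

noncomputable section

/-- Two realizations are equivalent on a subgraph `H` if they induce the same edge lengths. -/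
def EquivOn {α : Type*} {G : SimpleGraph α} (H : G.Subgraph) (ρ₁ ρ₂ : α → Pt) : Prop :=
  ∀ x y, H.Adj x y → dist (ρ₁ x) (ρ₁ y) = dist (ρ₂ x) (ρ₂ y)

/-- Two realizations are congruent on `H` if they induce the same distances between all
vertices of `H`. -/
def CongrOn {α : Type*} {G : SimpleGraph α} (H : G.Subgraph) (ρ₁ ρ₂ : α → Pt) : Prop :=
  ∀ x ∈ H.verts, ∀ y ∈ H.verts, dist (ρ₁ x) (ρ₁ y) = dist (ρ₂ x) (ρ₂ y)

/-- The framework `(H, ρ)` is globally rigid. -/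
def GloballyRigidAt {α : Type*} {G : SimpleGraph α} (H : G.Subgraph) (ρ : α → Pt) : Prop :=
  ∀ ρ' : α → Pt, EquivOn H ρ ρ' → CongrOn H ρ ρ'


open scoped RealInnerProductSpace

lemma li_pair_of_not_collinear {a b c : Pt} (h : ¬ Collinear ℝ ({a, b, c} : Set Pt)) :
    LinearIndependent ℝ ![b - a, c - a] := by
  rw [LinearIndependent.pair_iff]
  intro s t hst
  by_contra hco
  push_neg at hco
  apply h
  rw [collinear_iff_exists_forall_eq_smul_vadd]
  rcases eq_or_ne s 0 with hs | hs
  · have ht : t ≠ 0 := fun h0 => by simp [hs, h0] at hco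
    have h2 : t • (c - a) = (-s) • (b - a) := by
      linear_combination (norm := module) hst
    have hca : c - a = (t⁻¹ * (-s)) • (b - a) := by
      rw [← smul_smul, ← h2, smul_smul, inv_mul_cancel₀ ht, one_smul]
    refine ⟨a, b - a, ?_⟩
    rintro p (rfl | rfl | rfl)
    · exact ⟨0, by simp⟩
    · exact ⟨1, by simp⟩
    · exact ⟨t⁻¹ * (-s), by rw [← hca]; simp⟩
  · have h2 : s • (b - a) = (-t) • (c - a) := by
      linear_combination (norm := module) hst
    have hba : b - a = (s⁻¹ * (-t)) • (c - a) := by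
      rw [← smul_smul, ← h2, smul_smul, inv_mul_cancel₀ hs, one_smul]
    refine ⟨a, c - a, ?_⟩
    rintro p (rfl | rfl | rfl)
    · exact ⟨0, by simp⟩
    · exact ⟨s⁻¹ * (-t), by rw [← hba]; simp⟩
    · exact ⟨1, by simp⟩

set_option maxHeartbeats 1600000 in
/-- gluing two globally rigid graphs sharing three non-collinear vertices. -/
theorem stmt_13 {α : Type} (G : SimpleGraph α) (H₁ H₂ : G.Subgraph) (ρ : α → Pt)
    (hgen : AlgebraicIndependent ℚ (fun p : (H₁ ⊔ H₂).verts × Fin 2 => ρ p.1.1 p.2))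
    (h₁ : GloballyRigidAt H₁ ρ) (h₂ : GloballyRigidAt H₂ ρ)
    (a b c : α)
    (ha : a ∈ H₁.verts ∩ H₂.verts) (hb : b ∈ H₁.verts ∩ H₂.verts)
    (hc : c ∈ H₁.verts ∩ H₂.verts)
    (hncol : ¬ Collinear ℝ ({ρ a, ρ b, ρ c} : Set Pt)) :
    GloballyRigidAt (H₁ ⊔ H₂) ρ := by
  intro ρ' hequiv
  have he₁ : EquivOn H₁ ρ ρ' := fun x y hxy =>
    hequiv x y (SimpleGraph.Subgraph.sup_adj.mpr (Or.inl hxy))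
  have he₂ : EquivOn H₂ ρ ρ' := fun x y hxy =>
    hequiv x y (SimpleGraph.Subgraph.sup_adj.mpr (Or.inr hxy))
  have hcg₁ : CongrOn H₁ ρ ρ' := h₁ ρ' he₁
  have hcg₂ : CongrOn H₂ ρ ρ' := h₂ ρ' he₂
  set u₁ : Pt := ρ b - ρ a with hu₁
  set u₂ : Pt := ρ c - ρ a with hu₂
  set v₁ : Pt := ρ' b - ρ' a with hv₁
  set v₂ : Pt := ρ' c - ρ' a with hv₂
  have hli : LinearIndependent ℝ ![u₁, u₂] := li_pair_of_not_collinear hncol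
  -- norms are preserved on the triangle a b c
  have n1 : ‖u₁‖ = ‖v₁‖ := by
    rw [hu₁, hv₁, ← dist_eq_norm, ← dist_eq_norm]; exact hcg₁ b hb.1 a ha.1
  have n2 : ‖u₂‖ = ‖v₂‖ := by
    rw [hu₂, hv₂, ← dist_eq_norm, ← dist_eq_norm]; exact hcg₁ c hc.1 a ha.1
  have n12 : ‖u₁ - u₂‖ = ‖v₁ - v₂‖ := by
    rw [hu₁, hu₂, hv₁, hv₂, sub_sub_sub_cancel_right, sub_sub_sub_cancel_right,
      ← dist_eq_norm, ← dist_eq_norm]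
    exact hcg₁ b hb.1 c hc.1
  -- hence inner products are preserved
  have i11 : ⟪u₁, u₁⟫ = ⟪v₁, v₁⟫ := by
    rw [real_inner_self_eq_norm_mul_norm, real_inner_self_eq_norm_mul_norm, n1]
  have i22 : ⟪u₂, u₂⟫ = ⟪v₂, v₂⟫ := by
    rw [real_inner_self_eq_norm_mul_norm, real_inner_self_eq_norm_mul_norm, n2]
  have i12 : ⟪u₁, u₂⟫ = ⟪v₁, v₂⟫ := by
    have e1 := norm_sub_sq_real u₁ u₂
    have e2 := norm_sub_sq_real v₁ v₂
    rw [n1, n2, n12] at e1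
    have i11' := i11
    have i22' := i22
    rw [real_inner_self_eq_norm_mul_norm, real_inner_self_eq_norm_mul_norm] at i11' i22'
    nlinarith [i11', i22', e1, e2]
  -- build the linear isometry T sending u's to v's
  have hcard : Fintype.card (Fin 2) = Module.finrank ℝ Pt := by
    simp [finrank_euclideanSpace_fin]
  let B : Module.Basis (Fin 2) ℝ Pt := basisOfLinearIndependentOfCardEqFinrank hli hcard
  have hB : ⇑B = ![u₁, u₂] := coe_basisOfLinearIndependentOfCardEqFinrank hli hcard
  let T : Pt →ₗ[ℝ] Pt := B.constr ℝ ![v₁, v₂]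
  have hT1 : T u₁ = v₁ := by
    have := B.constr_basis ℝ ![v₁, v₂] 0
    rwa [hB] at this
  have hT2 : T u₂ = v₂ := by
    have := B.constr_basis ℝ ![v₁, v₂] 1
    rwa [hB] at this
  have expand : ∀ (p q r s : Pt) (γ δ ε ζ : ℝ),
      ⟪γ • p + δ • q, ε • r + ζ • s⟫ =
        γ * ε * ⟪p, r⟫ + γ * ζ * ⟪p, s⟫ + δ * ε * ⟪q, r⟫ + δ * ζ * ⟪q, s⟫ := by
    intros
    simp only [inner_add_left, inner_add_right, real_inner_smul_left, real_inner_smul_right]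
    ring
  have hrepr : ∀ x : Pt, x = B.repr x 0 • u₁ + B.repr x 1 • u₂ := by
    intro x
    conv_lhs => rw [← B.sum_repr x]
    rw [Fin.sum_univ_two, hB]
    simp only [Matrix.cons_val_zero, Matrix.cons_val_one, Matrix.head_cons]
  have hTx : ∀ x : Pt, T x = B.repr x 0 • v₁ + B.repr x 1 • v₂ := by
    intro x
    conv_lhs => rw [hrepr x]
    rw [map_add, map_smul, map_smul, hT1, hT2]
  have hTinner : ∀ x y : Pt, ⟪T x, T y⟫ = ⟪x, y⟫ := by
    intro x y
    rw [hTx x, hTx y, expand]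
    conv_rhs => rw [hrepr x, hrepr y]
    rw [expand, i11, i22, i12, real_inner_comm u₁ u₂, i12, real_inner_comm v₁ v₂]
  have hTnorm : ∀ x : Pt, ‖T x‖ = ‖x‖ := by
    intro x
    have h := hTinner x x
    rw [real_inner_self_eq_norm_mul_norm, real_inner_self_eq_norm_mul_norm] at h
    nlinarith [norm_nonneg (T x), norm_nonneg x, h]
  -- the affine isometry f
  set f : Pt → Pt := fun x => ρ' a + T (x - ρ a) with hf
  have hdistf : ∀ x y : Pt, dist (f x) (f y) = dist x y := by
    intro x y
    rw [hf]
    simp only [dist_eq_norm, add_sub_add_left_eq_sub, ← map_sub, sub_sub_sub_cancel_right]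
    exact hTnorm _
  have hfa : f (ρ a) = ρ' a := by
    rw [hf]
    show ρ' a + T (ρ a - ρ a) = ρ' a
    rw [sub_self, map_zero, add_zero]
  have hfb : f (ρ b) = ρ' b := by
    rw [hf]
    show ρ' a + T (ρ b - ρ a) = ρ' b
    rw [← hu₁, hT1, hv₁]
    abel
  have hfc : f (ρ c) = ρ' c := by
    rw [hf]
    show ρ' a + T (ρ c - ρ a) = ρ' c
    rw [← hu₂, hT2, hv₂]
    abel
  -- v₁, v₂ span the plane
  have hliv : LinearIndependent ℝ ![v₁, v₂] := by
    rw [LinearIndependent.pair_iff]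
    intro s t hst
    have h0 : ‖T (s • u₁ + t • u₂)‖ = 0 := by
      rw [map_add, map_smul, map_smul, hT1, hT2, hst, norm_zero]
    rw [hTnorm] at h0
    exact hli.eq_zero_of_pair (norm_eq_zero.mp h0)
  have hrange : Set.range ![v₁, v₂] = {v₁, v₂} := by
    ext z
    simp only [Set.mem_range, Fin.exists_fin_two, Matrix.cons_val_zero, Matrix.cons_val_one,
      Matrix.head_cons, Set.mem_insert_iff, Set.mem_singleton_iff]
    tauto
  have hspan : Submodule.span ℝ ({v₁, v₂} : Set Pt) = ⊤ := by
    have := hliv.span_eq_top_of_card_eq_finrank hcard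
    rwa [hrange] at this
  -- uniqueness: a point is determined by its distances to ρ' a, ρ' b, ρ' c
  have huniq : ∀ p q : Pt, dist p (ρ' a) = dist q (ρ' a) →
      dist p (ρ' b) = dist q (ρ' b) → dist p (ρ' c) = dist q (ρ' c) → p = q := by
    intro p q d1 d2 d3
    have o1 : ⟪v₁, q - p⟫ = 0 := by
      have := EuclideanGeometry.inner_vsub_vsub_of_dist_eq_of_dist_eq d1 d2
      rwa [vsub_eq_sub, vsub_eq_sub, ← hv₁] at this
    have o2 : ⟪v₂, q - p⟫ = 0 := by
      have := EuclideanGeometry.inner_vsub_vsub_of_dist_eq_of_dist_eq d1 d3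
      rwa [vsub_eq_sub, vsub_eq_sub, ← hv₂] at this
    have hmem : q - p ∈ Submodule.span ℝ ({v₁, v₂} : Set Pt) := by
      rw [hspan]; exact Submodule.mem_top
    rcases Submodule.mem_span_pair.mp hmem with ⟨s, t, hw⟩
    have hz : ⟪s • v₁ + t • v₂, q - p⟫ = (0 : ℝ) := by
      rw [inner_add_left, real_inner_smul_left, real_inner_smul_left, o1, o2]
      ring
    rw [hw] at hz
    have := inner_self_eq_zero.mp hz
    rw [sub_eq_zero] at this
    exact this.symm
  -- every vertex of the union is moved by f
  have hkey : ∀ z ∈ (H₁ ⊔ H₂).verts, ρ' z = f (ρ z) := by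
    intro z hzv
    have hdists : dist (ρ z) (ρ a) = dist (ρ' z) (ρ' a) ∧
        dist (ρ z) (ρ b) = dist (ρ' z) (ρ' b) ∧
        dist (ρ z) (ρ c) = dist (ρ' z) (ρ' c) := by
      rcases hzv with hz1 | hz2
      · exact ⟨hcg₁ z hz1 a ha.1, hcg₁ z hz1 b hb.1, hcg₁ z hz1 c hc.1⟩
      · exact ⟨hcg₂ z hz2 a ha.2, hcg₂ z hz2 b hb.2, hcg₂ z hz2 c hc.2⟩
    refine huniq _ _ ?_ ?_ ?_
    · conv_rhs => rw [← hfa]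
      rw [hdistf]
      exact hdists.1.symm
    · conv_rhs => rw [← hfb]
      rw [hdistf]
      exact hdists.2.1.symm
    · conv_rhs => rw [← hfc]
      rw [hdistf]
      exact hdists.2.2.symm
  intro x hx y hy
  rw [hkey x hx, hkey y hy, hdistf]
end
end
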